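/- arXiv:2105.12589 — 2 statements merged into one kernel-verified Lean document; each statement's English description precedes it below -/
import Mathlib

section
/- If A and B are positive semidefinite Hermitian matrices, then every eigenvalue of AB satisfies λ_i(AB) ≤ λ_max(A) · λ_i(B), where eigenvalues are ordered decreasingly. -/
open scoped Matrix ComplexOrder

/-- The eigenvalues of a Hermitian matrix, listed in decreasing order. -/
noncomputable def eigsDesc {n : ℕ} {M : Matrix (Fin n) (Fin n) ℂ} (hM : M.IsHermitian) :
    Fin n → ℝ :=
  fun i => hM.eigenvalues (Tuple.sort hM.eigenvalues i.rev)

/-!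
Write `S = B^{1/2}`. Then `AB = (AS)S` and `S(AS) = SAS` have the same characteristic polynomial,
so the `μ i` are the decreasingly ordered eigenvalues of the Hermitian matrix `SAS`. Since
`A ≤ λ_max(A) • 1`, conjugating by `S` gives `SAS ≤ λ_max(A) • B` in the Loewner order, and the
Courant–Fischer comparison of eigenvalues turns this into `λ_i(SAS) ≤ λ_max(A) λ_i(B)`.
-/

open Polynomial
open scoped InnerProductSpace MatrixOrder

theorem eq_of_antitone_of_map_univ_val_eq {α : Type*} [PartialOrder α] {n : ℕ} {f g : Fin n → α}
    (hf : Antitone f) (hg : Antitone g) (h : Finset.univ.val.map f = Finset.univ.val.map g) :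
    f = g := by
  rw [Fin.univ_val_map, Fin.univ_val_map, Multiset.coe_eq_coe] at h
  exact List.ofFn_injective (h.eq_of_pairwise' hf.sortedGE_ofFn.pairwise hg.sortedGE_ofFn.pairwise)

theorem roots_prod_univ_X_sub_C {R ι : Type*} [CommRing R] [IsDomain R] [Fintype ι] (f : ι → R) :
    (∏ i, (X - C (f i))).roots = Finset.univ.val.map f := by
  rw [roots_prod _ _ (Finset.prod_ne_zero_iff.mpr fun i _ => X_sub_C_ne_zero (f i))]
  simp

theorem eq_of_antitone_of_prod_X_sub_C_eq {n : ℕ} {μ ν : Fin n → ℝ} (hμ : Antitone μ)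
    (hν : Antitone ν) (h : ∏ i, (X - C (μ i : ℂ)) = ∏ i, (X - C (ν i : ℂ))) : μ = ν := by
  apply eq_of_antitone_of_map_univ_val_eq hμ hν
  apply Multiset.map_injective Complex.ofReal_injective
  simpa only [roots_prod_univ_X_sub_C, Multiset.map_map, Function.comp_def] using congrArg roots h

section Eigenbasis

variable {𝕜 E : Type*} [RCLike 𝕜] [NormedAddCommGroup E] [InnerProductSpace 𝕜 E]

theorem exists_ne_zero_forall_inner_eq_zero [FiniteDimensional 𝕜 E] {κ : Type*} [Fintype κ]
    (v : κ → E) (h : Fintype.card κ < Module.finrank 𝕜 E) : ∃ x ≠ 0, ∀ j, ⟪v j, x⟫_𝕜 = 0 := by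
  let f : E →ₗ[𝕜] κ → 𝕜 := LinearMap.pi fun j => innerₛₗ 𝕜 (v j)
  have hf : LinearMap.ker f ≠ ⊥ :=
    LinearMap.ker_ne_bot_of_finrank_lt (by rwa [Module.finrank_fintype_fun_eq_card])
  obtain ⟨x, hx, hx0⟩ := Submodule.exists_mem_ne_zero_of_ne_bot hf
  exact ⟨x, hx0, fun j => congrFun hx j⟩

section

variable {ι : Type*} [Fintype ι] {T : E →ₗ[𝕜] E} (b : OrthonormalBasis ι 𝕜 E) {ev : ι → ℝ}

theorem re_inner_map_self_eq_sum_of_apply_eq_smul (hb : ∀ k, T (b k) = (ev k : 𝕜) • b k)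
    (x : E) : RCLike.re ⟪T x, x⟫_𝕜 = ∑ k, ev k * ‖⟪b k, x⟫_𝕜‖ ^ 2 := by
  have hTx : T x = ∑ k, (ev k * ⟪b k, x⟫_𝕜) • b k := by
    conv_lhs => rw [← b.sum_repr' x]
    simp only [map_sum, map_smul, hb, smul_smul, mul_comm]
  rw [hTx, sum_inner, map_sum]
  refine Finset.sum_congr rfl fun k _ => ?_
  rw [inner_smul_left, map_mul (starRingEnd 𝕜), RCLike.conj_ofReal, mul_assoc, RCLike.conj_mul]
  norm_cast

theorem mul_norm_sq_le_re_inner_map_self [LinearOrder ι] (hb : ∀ k, T (b k) = (ev k : 𝕜) • b k)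
    (hev : Antitone ev) {i : ι} {x : E} (hx : ∀ k, i < k → ⟪b k, x⟫_𝕜 = 0) :
    ev i * ‖x‖ ^ 2 ≤ RCLike.re ⟪T x, x⟫_𝕜 := by
  rw [re_inner_map_self_eq_sum_of_apply_eq_smul b hb, ← b.sum_sq_norm_inner_right, Finset.mul_sum]
  refine Finset.sum_le_sum fun k _ => ?_
  rcases le_or_gt k i with hki | hik
  · exact mul_le_mul_of_nonneg_right (hev hki) (sq_nonneg _)
  · simp [hx k hik]

theorem re_inner_map_self_le_mul_norm_sq [LinearOrder ι] (hb : ∀ k, T (b k) = (ev k : 𝕜) • b k)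
    (hev : Antitone ev) {i : ι} {x : E} (hx : ∀ k, k < i → ⟪b k, x⟫_𝕜 = 0) :
    RCLike.re ⟪T x, x⟫_𝕜 ≤ ev i * ‖x‖ ^ 2 := by
  rw [re_inner_map_self_eq_sum_of_apply_eq_smul b hb, ← b.sum_sq_norm_inner_right, Finset.mul_sum]
  refine Finset.sum_le_sum fun k _ => ?_
  rcases le_or_gt i k with hik | hki
  · exact mul_le_mul_of_nonneg_right (hev hik) (sq_nonneg _)
  · simp [hx k hki]

end

theorem le_mul_of_forall_re_inner_le {n : ℕ} {S T : E →ₗ[𝕜] E} (b c : OrthonormalBasis (Fin n) 𝕜 E)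
    {ev ew : Fin n → ℝ} (hb : ∀ k, S (b k) = (ev k : 𝕜) • b k)
    (hc : ∀ k, T (c k) = (ew k : 𝕜) • c k) (hev : Antitone ev) (hew : Antitone ew)
    {a : ℝ} (ha : 0 ≤ a) (hST : ∀ x, RCLike.re ⟪S x, x⟫_𝕜 ≤ a * RCLike.re ⟪T x, x⟫_𝕜)
    (i : Fin n) : ev i ≤ a * ew i := by
  have : FiniteDimensional 𝕜 E := b.toBasis.finiteDimensional_of_finite
  -- `x` lies in the span of `b 0, …, b i` and in that of `c i, …, c (n - 1)`:
  -- these are only `(n - 1 - i) + i < n` linear conditions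
  obtain ⟨x, hx0, hx⟩ := exists_ne_zero_forall_inner_eq_zero
    (Sum.elim (fun k : Finset.Ioi i => b k) (fun k : Finset.Iio i => c k)) (by
      rw [Fintype.card_sum, Fintype.card_coe, Fintype.card_coe, Fin.card_Ioi, Fin.card_Iio,
        Module.finrank_eq_card_basis b.toBasis, Fintype.card_fin]
      omega)
  have hS := mul_norm_sq_le_re_inner_map_self b hb hev (i := i) (x := x)
    fun k hk => hx (.inl ⟨k, Finset.mem_Ioi.mpr hk⟩)
  have hT := re_inner_map_self_le_mul_norm_sq c hc hew (i := i) (x := x)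
    fun k hk => hx (.inr ⟨k, Finset.mem_Iio.mpr hk⟩)
  have hx2 : 0 < ‖x‖ ^ 2 := by positivity
  nlinarith [hST x, mul_le_mul_of_nonneg_left hT ha]

end Eigenbasis

section eigsDesc

variable {n : ℕ} {M : Matrix (Fin n) (Fin n) ℂ}

noncomputable def eigvecsDesc (hM : M.IsHermitian) :
    OrthonormalBasis (Fin n) ℂ (EuclideanSpace ℂ (Fin n)) :=
  hM.eigenvectorBasis.reindex (Fin.revPerm.trans (Tuple.sort hM.eigenvalues)).symm

theorem toEuclideanLin_eigvecsDesc (hM : M.IsHermitian) (k : Fin n) :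
    M.toEuclideanLin (eigvecsDesc hM k) = (eigsDesc hM k : ℂ) • eigvecsDesc hM k := by
  rw [eigvecsDesc, OrthonormalBasis.reindex_apply, Equiv.symm_symm]
  apply WithLp.ofLp_injective
  rw [Matrix.ofLp_toLpLin, Matrix.toLin'_apply, WithLp.ofLp_smul, hM.mulVec_eigenvectorBasis,
    RCLike.real_smul_eq_coe_smul (K := ℂ)]
  rfl

theorem eigsDesc_antitone (hM : M.IsHermitian) : Antitone (eigsDesc hM) :=
  fun _ _ hab => Tuple.monotone_sort hM.eigenvalues (Fin.rev_le_rev.mpr hab)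

theorem charpoly_eq_prod_eigsDesc (hM : M.IsHermitian) :
    M.charpoly = ∏ i, (X - C (eigsDesc hM i : ℂ)) := by
  rw [hM.charpoly_eq]
  exact (Equiv.prod_comp (Fin.revPerm.trans (Tuple.sort hM.eigenvalues))
    fun j => X - C (hM.eigenvalues j : ℂ)).symm

theorem eigenvalues_le_eigsDesc_zero (hM : M.IsHermitian) (h : 0 < n) (j : Fin n) :
    hM.eigenvalues j ≤ eigsDesc hM ⟨0, h⟩ := by
  obtain ⟨k, rfl⟩ := (Fin.revPerm.trans (Tuple.sort hM.eigenvalues)).surjective j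
  exact eigsDesc_antitone hM (Fin.le_iff_val_le_val.mpr (Nat.zero_le _))

theorem le_eigsDesc_zero_smul_one (hM : M.IsHermitian) (h : 0 < n) :
    M ≤ eigsDesc hM ⟨0, h⟩ • (1 : Matrix (Fin n) (Fin n) ℂ) := by
  rw [← Algebra.algebraMap_eq_smul_one, le_algebraMap_iff_spectrum_le hM.isSelfAdjoint,
    hM.spectrum_real_eq_range_eigenvalues]
  rintro _ ⟨j, rfl⟩
  exact eigenvalues_le_eigsDesc_zero hM h j

theorem eigsDesc_le_mul_of_le_smul {C D : Matrix (Fin n) (Fin n) ℂ} (hC : C.IsHermitian)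
    (hD : D.IsHermitian) {a : ℝ} (ha : 0 ≤ a) (h : C ≤ a • D) (i : Fin n) :
    eigsDesc hC i ≤ a * eigsDesc hD i := by
  have hq : ∀ x, RCLike.re ⟪C.toEuclideanLin x, x⟫_ℂ ≤ a * RCLike.re ⟪D.toEuclideanLin x, x⟫_ℂ := by
    intro x
    have := (Matrix.isPositive_toEuclideanLin_iff.mpr (Matrix.le_iff.mp h)).2 x
    simp only [map_sub, LinearMap.sub_apply, inner_sub_left, RCLike.real_smul_eq_coe_smul (K := ℂ),
      map_smul, LinearMap.smul_apply, inner_smul_left, RCLike.conj_ofReal, RCLike.re_ofReal_mul]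
      at this
    linarith
  exact le_mul_of_forall_re_inner_le (eigvecsDesc hC) (eigvecsDesc hD)
    (toEuclideanLin_eigvecsDesc hC) (toEuclideanLin_eigvecsDesc hD) (eigsDesc_antitone hC)
    (eigsDesc_antitone hD) ha hq i

end eigsDesc

/-- If `A` and `B` are positive semidefinite Hermitian matrices and `μ` is the decreasing
enumeration of the eigenvalues of `A * B` (i.e. `μ` is antitone and the characteristic
polynomial of `A * B` is `∏ i, (X - μ i)`), then `μ i ≤ λ_max(A) * λ_i(B)` for every `i`. -/
theorem eig_mul_psd_le {n : ℕ} {A B : Matrix (Fin n) (Fin n) ℂ}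
    (hA : A.PosSemidef) (hB : B.PosSemidef) (μ : Fin n → ℝ) (hμ : Antitone μ)
    (hchar : (A * B).charpoly = ∏ i : Fin n, (Polynomial.X - Polynomial.C ((μ i : ℂ))))
    (i : Fin n) :
    μ i ≤ eigsDesc hA.isHermitian ⟨0, i.pos⟩ * eigsDesc hB.isHermitian i := by
  set S := CFC.sqrt B
  have hSS : S * S = B := CFC.sqrt_mul_sqrt_self B hB.nonneg
  have hS : star S = S := (CFC.sqrt_nonneg B).isSelfAdjoint
  have hC : (S * A * S).IsHermitian := by
    have := (hA.conjTranspose_mul_mul_same S).isHermitian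
    rwa [← Matrix.star_eq_conjTranspose, hS] at this
  have hμC : μ = eigsDesc hC := by
    refine eq_of_antitone_of_prod_X_sub_C_eq hμ (eigsDesc_antitone hC) ?_
    rw [← hchar, ← charpoly_eq_prod_eigsDesc, ← hSS, ← mul_assoc, Matrix.charpoly_mul_comm,
      ← mul_assoc]
  have hle : S * A * S ≤ eigsDesc hA.isHermitian ⟨0, i.pos⟩ • B := by
    calc S * A * S ≤ star S * (eigsDesc hA.isHermitian ⟨0, i.pos⟩ • 1) * S := by
          simpa only [hS] using star_left_conjugate_le_conjugate
            (le_eigsDesc_zero_smul_one hA.isHermitian i.pos) S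
      _ = eigsDesc hA.isHermitian ⟨0, i.pos⟩ • B := by
          rw [hS, mul_smul_comm, mul_one, smul_mul_assoc, hSS]
  rw [hμC]
  exact eigsDesc_le_mul_of_le_smul hC hB.isHermitian (hA.eigenvalues_nonneg _) hle i
end

section
/- Let C be an n×n real symmetric matrix with diagonal d and off-diagonal part C′. Suppose estimators g_j of c_{jj} satisfy E[(g_j − c_{jj})²] ≤ 2δ₁²c_{jj}², and estimators h_{jk} (j<k) of c_{jk} satisfy E[(h_{jk} − c_{jk})²] ≤ 2(δ₂ c_{jk} + ½(δ₁+δ₂)(c_{jj}+c_{kk}))². Form the symmetric matrix Ĉ′ with zero diagonal and entries h_{jk}. Then E[‖Ĉ′ − C′‖_F²] ≤ 3(n−1)(δ₁+δ₂)²‖d‖₂² + 6δ₂²‖C′‖_F². -/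
/-!
Only the strictly upper entries `h j k` are estimated, and each enters `Ĉ′ − C′` twice, by
symmetry. By `(a₁ + a₂ + a₃)² ≤ 3(a₁² + a₂² + a₃²)` the mean square error of the entry `(j, k)`
is at most `6δ₂²c_{jk}² + (3/2)(δ₁ + δ₂)²(c_{jj}² + c_{kk}²)`; summing over the `n(n − 1)`
off-diagonal positions, every `c_{jj}²` is met `2(n − 1)` times.
-/

open Finset MeasureTheory

section ZeroDiag

variable {ι α : Type*}

-- `zeroDiag C` is the paper's `C′`, and `symmOfUpper (h · · ω)` is `Ĉ′`.
def zeroDiag [DecidableEq ι] [Zero α] (A : ι → ι → α) (j k : ι) : α :=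
  if j = k then 0 else A j k

def symmOfUpper [LinearOrder ι] [Zero α] (A : ι → ι → α) (j k : ι) : α :=
  if j = k then 0 else if j < k then A j k else A k j

theorem zeroDiag_comm [DecidableEq ι] [Zero α] {A : ι → ι → α}
    (hA : ∀ j k, A j k = A k j) (j k : ι) : zeroDiag A j k = zeroDiag A k j := by
  simp only [zeroDiag, eq_comm (a := j), hA j k]

theorem symmOfUpper_comm [LinearOrder ι] [Zero α] (A : ι → ι → α) (j k : ι) :
    symmOfUpper A j k = symmOfUpper A k j := by
  rcases lt_trichotomy j k with hjk | rfl | hjk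
  · simp [symmOfUpper, hjk.ne, hjk.ne', hjk, hjk.not_gt]
  · rfl
  · simp [symmOfUpper, hjk.ne, hjk.ne', hjk, hjk.not_gt]

theorem sum_zeroDiag [Fintype ι] [DecidableEq ι] [AddCommGroup α] (A : ι → ι → α) (j : ι) :
    ∑ k, zeroDiag A j k = ∑ k, A j k - A j j := by
  have hrow : ∀ k, zeroDiag A j k = A j k - if j = k then A j k else 0 := fun k => by
    by_cases hjk : j = k <;> simp [zeroDiag, hjk]
  simp only [hrow, sum_sub_distrib, sum_ite_eq, mem_univ, if_true]

theorem sum_sum_zeroDiag_add [Fintype ι] [DecidableEq ι] [CommRing α] (f : ι → α) :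
    ∑ j, ∑ k, zeroDiag (fun a b => f a + f b) j k = 2 * (Fintype.card ι - 1) * ∑ j, f j := by
  simp only [sum_zeroDiag, sum_add_distrib, sum_sub_distrib, sum_const, card_univ, nsmul_eq_mul,
    ← mul_sum]
  ring

end ZeroDiag

theorem sq_add_add_le_three_mul {R : Type*} [CommRing R] [LinearOrder R] [IsStrictOrderedRing R]
    (a b c : R) : (a + b + c) ^ 2 ≤ 3 * (a ^ 2 + b ^ 2 + c ^ 2) := by
  nlinarith [sq_nonneg (a - b), sq_nonneg (b - c), sq_nonneg (a - c)]

theorem two_mul_sq_add_half_mul_add_le {R : Type*} [Field R] [LinearOrder R]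
    [IsStrictOrderedRing R] (δ₁ δ₂ c a b : R) :
    2 * (δ₂ * c + 1 / 2 * (δ₁ + δ₂) * (a + b)) ^ 2 ≤
      6 * δ₂ ^ 2 * c ^ 2 + 3 / 2 * (δ₁ + δ₂) ^ 2 * (a ^ 2 + b ^ 2) := by
  have := sq_add_add_le_three_mul (δ₂ * c) (1 / 2 * (δ₁ + δ₂) * a) (1 / 2 * (δ₁ + δ₂) * b)
  linarith

section Estimator

variable {ι Ω : Type*} [LinearOrder ι] {C : ι → ι → ℝ} {h : ι → ι → Ω → ℝ}

theorem sq_symmOfUpper_sub_zeroDiag_comm (hC : ∀ j k, C j k = C k j) (ω : Ω) (j k : ι) :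
    (symmOfUpper (h · · ω) j k - zeroDiag C j k) ^ 2 =
      (symmOfUpper (h · · ω) k j - zeroDiag C k j) ^ 2 := by
  rw [symmOfUpper_comm, zeroDiag_comm hC]

variable [MeasurableSpace Ω] {μ : Measure Ω}

theorem integrable_sq_symmOfUpper_sub_zeroDiag (hC : ∀ j k, C j k = C k j)
    (hhint : ∀ j k, j < k → Integrable (fun ω => (h j k ω - C j k) ^ 2) μ) (j k : ι) :
    Integrable (fun ω => (symmOfUpper (h · · ω) j k - zeroDiag C j k) ^ 2) μ := by
  wlog hjk : j < k generalizing j k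
  · rcases (not_lt.1 hjk).eq_or_lt with rfl | hkj
    · simp [symmOfUpper, zeroDiag]
    · simpa only [sq_symmOfUpper_sub_zeroDiag_comm hC] using this k j hkj
  simpa [symmOfUpper, zeroDiag, hjk.ne, hjk] using hhint j k hjk

theorem integral_sq_symmOfUpper_sub_zeroDiag_le (hC : ∀ j k, C j k = C k j) {δ₁ δ₂ : ℝ}
    (hh : ∀ j k, j < k → ∫ ω, (h j k ω - C j k) ^ 2 ∂μ ≤
      2 * (δ₂ * C j k + (1 / 2) * (δ₁ + δ₂) * (C j j + C k k)) ^ 2) (j k : ι) :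
    ∫ ω, (symmOfUpper (h · · ω) j k - zeroDiag C j k) ^ 2 ∂μ ≤
      6 * δ₂ ^ 2 * zeroDiag C j k ^ 2 +
        3 / 2 * (δ₁ + δ₂) ^ 2 * zeroDiag (fun a b => C a a ^ 2 + C b b ^ 2) j k := by
  wlog hjk : j < k generalizing j k
  · rcases (not_lt.1 hjk).eq_or_lt with rfl | hkj
    · simp [symmOfUpper, zeroDiag]
    · simpa only [sq_symmOfUpper_sub_zeroDiag_comm hC, zeroDiag_comm hC j k,
        zeroDiag_comm (fun a b => add_comm (C a a ^ 2) (C b b ^ 2)) j k] using this k j hkj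
  simp only [symmOfUpper, zeroDiag, hjk.ne, hjk, if_false, if_true]
  exact (hh j k hjk).trans (two_mul_sq_add_half_mul_add_le _ _ _ _ _)

end Estimator

theorem naive_offdiag_error_bound_general {n : ℕ} {Ω : Type*} [MeasurableSpace Ω]
    (μ : Measure Ω)
    (C : Matrix (Fin n) (Fin n) ℝ) (hC : C.IsSymm)
    (δ₁ δ₂ : ℝ) (h : Fin n → Fin n → Ω → ℝ)
    (hhint : ∀ j k, j < k → Integrable (fun ω => (h j k ω - C j k) ^ 2) μ)
    (hh : ∀ j k, j < k → ∫ ω, (h j k ω - C j k) ^ 2 ∂μ ≤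
      2 * (δ₂ * C j k + (1 / 2) * (δ₁ + δ₂) * (C j j + C k k)) ^ 2) :
    ∫ ω, (∑ j, ∑ k,
        ((if j = k then 0 else if j < k then h j k ω else h k j ω) -
          (if j = k then 0 else C j k)) ^ 2) ∂μ ≤
      3 * ((n : ℝ) - 1) * (δ₁ + δ₂) ^ 2 * (∑ j, (C j j) ^ 2) +
        6 * δ₂ ^ 2 * ∑ j, ∑ k, (if j = k then (0 : ℝ) else C j k) ^ 2 := by
  have hsymm : ∀ j k, C j k = C k j := fun j k => hC.apply k j
  have hint := integrable_sq_symmOfUpper_sub_zeroDiag (μ := μ) hsymm hhint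
  calc ∫ ω, ∑ j, ∑ k, (symmOfUpper (h · · ω) j k - zeroDiag C j k) ^ 2 ∂μ
      = ∑ j, ∑ k, ∫ ω, (symmOfUpper (h · · ω) j k - zeroDiag C j k) ^ 2 ∂μ := by
        rw [integral_finsetSum _ fun j _ => integrable_finsetSum _ fun k _ => hint j k]
        exact sum_congr rfl fun j _ => integral_finsetSum _ fun k _ => hint j k
    _ ≤ ∑ j, ∑ k, (6 * δ₂ ^ 2 * zeroDiag C j k ^ 2 +
          3 / 2 * (δ₁ + δ₂) ^ 2 * zeroDiag (fun a b => C a a ^ 2 + C b b ^ 2) j k) :=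
        sum_le_sum fun j _ => sum_le_sum fun k _ =>
          integral_sq_symmOfUpper_sub_zeroDiag_le hsymm hh j k
    _ = _ := by
        simp only [sum_add_distrib, ← mul_sum]
        rw [sum_sum_zeroDiag_add (fun a => C a a ^ 2), Fintype.card_fin]
        simp only [zeroDiag]
        ring

/-- Error bound for the naive estimator of the off-diagonal part of a symmetric
correlation matrix `C`.  If the single-element estimators `g_j`, `h_{jk}` satisfy
`E[(g_j − c_{jj})²] ≤ 2δ₁² c_{jj}²` and, for `j < k`,
`E[(h_{jk} − c_{jk})²] ≤ 2(δ₂ c_{jk} + ½(δ₁+δ₂)(c_{jj}+c_{kk}))²`, then the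
symmetrized estimator `Ĉ′` with zero diagonal satisfies
`E[‖Ĉ′ − C′‖_F²] ≤ 3(n−1)(δ₁+δ₂)²‖diag C‖₂² + 6δ₂²‖C′‖_F²`. -/
theorem naive_offdiag_error_bound {n : ℕ} {Ω : Type*} [MeasurableSpace Ω]
    (μ : Measure Ω) [IsProbabilityMeasure μ]
    (C : Matrix (Fin n) (Fin n) ℝ) (hC : C.IsSymm) (hdiag : ∀ j, 0 ≤ C j j)
    (δ₁ δ₂ : ℝ) (g : Fin n → Ω → ℝ) (h : Fin n → Fin n → Ω → ℝ)
    (hgint : ∀ j, Integrable (fun ω => (g j ω - C j j) ^ 2) μ)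
    (hhint : ∀ j k, j < k → Integrable (fun ω => (h j k ω - C j k) ^ 2) μ)
    (hg : ∀ j, ∫ ω, (g j ω - C j j) ^ 2 ∂μ ≤ 2 * δ₁ ^ 2 * (C j j) ^ 2)
    (hh : ∀ j k, j < k → ∫ ω, (h j k ω - C j k) ^ 2 ∂μ ≤
      2 * (δ₂ * C j k + (1 / 2) * (δ₁ + δ₂) * (C j j + C k k)) ^ 2) :
    ∫ ω, (∑ j, ∑ k,
        ((if j = k then 0 else if j < k then h j k ω else h k j ω) -
          (if j = k then 0 else C j k)) ^ 2) ∂μ ≤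
      3 * ((n : ℝ) - 1) * (δ₁ + δ₂) ^ 2 * (∑ j, (C j j) ^ 2) +
        6 * δ₂ ^ 2 * ∑ j, ∑ k, (if j = k then (0 : ℝ) else C j k) ^ 2 :=
  naive_offdiag_error_bound_general μ C hC δ₁ δ₂ h hhint hh
end
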